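/- Let M and N be integers with 2 ≤ M < N and let R ≥ 2N + 4M + 1 be an integer. Then there exists a function K : ℤ → ℝ such that: (1) K(k) = 1 for all |k| ≤ N; (2) K(k) = 0 for all |k| ≥ N + 2M; and (3) (1/R) ∑_{j=1}^R |K̂(j/R)| ≤ 32π(2 + log(1 + N/M)), where K̂(t) = ∑_{k ∈ ℤ} K(k) e(kt). -/

import Mathlib

/-!
Take for `K` the convolution of the indicators of `[-(M-1), M-1]` and `[-(N+M), N+M]`, divided
by `c = 2M - 1`; it is `1` on `[-N, N]` and vanishes outside `(-(N+2M), N+2M)`, and `K̂` is the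
product of two Dirichlet kernels divided by `c`. A Dirichlet kernel `D_L(t)` is bounded both by
`2L + 1` and by `1 / |sin πt|`, and `|sin (πj/R)| ≥ 2m/R` for `m = min(j, R - j)` (Jordan).
Hence, with `P = 2(N+M) + 1` and `x = R/2`, `|K̂(j/R)| ≤ min(P, x/m, x²/(c m²))`. Summed over
`m`, the three regimes `m ≤ x/P`, `x/P < m ≤ x/c` and `m > x/c` contribute at most `x`,
`x (1 + log (P/c))` and `2x`.
-/

noncomputable def e (x : ℝ) : ℂ := Complex.exp (2 * Real.pi * Complex.I * x)

open Finset Real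

lemma norm_e (t : ℝ) : ‖e t‖ = 1 := by
  rw [e, Complex.norm_exp]
  simp

lemma e_add (s t : ℝ) : e (s + t) = e s * e t := by
  rw [e, e, e, ← Complex.exp_add]
  push_cast
  ring_nf

lemma e_intCast_mul (k : ℤ) (t : ℝ) : e (k * t) = e t ^ k := by
  rw [e, e, ← Complex.exp_int_mul]
  push_cast
  ring_nf

lemma norm_e_sub_one (t : ℝ) : ‖e t - 1‖ = 2 * |sin (π * t)| := by
  rw [e, show 2 * (π : ℂ) * Complex.I * t = Complex.I * (2 * π * t : ℝ) by push_cast; ring,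
    Complex.norm_exp_I_mul_ofReal_sub_one, norm_mul, Real.norm_two, Real.norm_eq_abs,
    mul_assoc, mul_div_cancel_left₀ _ two_ne_zero]

lemma geom_sum_Icc_zpow_mul {K : Type*} [Field K] {z : K} (hz : z ≠ 0) {a b : ℤ}
    (hab : a ≤ b + 1) : (∑ k ∈ Icc a b, z ^ k) * (z - 1) = z ^ (b + 1) - z ^ a := by
  obtain ⟨n, hn⟩ : ∃ n : ℕ, (b + 1 - a).toNat = n := ⟨_, rfl⟩
  have hb : b + 1 = a + n := by omega
  rw [Int.Icc_eq_finset_map, sum_map, hn, hb]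
  simp only [Function.Embedding.trans_apply, Nat.castEmbedding_apply, addLeftEmbedding_apply,
    zpow_add₀ hz, zpow_natCast]
  rw [← mul_sum, mul_assoc, geom_sum_mul]
  ring

noncomputable def dirichletKernel (L : ℤ) (t : ℝ) : ℂ := ∑ k ∈ Icc (-L) L, e (k * t)

lemma norm_dirichletKernel_le {L : ℤ} (hL : 0 ≤ L) (t : ℝ) :
    ‖dirichletKernel L t‖ ≤ 2 * L + 1 := by
  calc ‖dirichletKernel L t‖ ≤ ∑ k ∈ Icc (-L) L, ‖e (k * t)‖ := norm_sum_le _ _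
    _ = 2 * L + 1 := by
      simp only [norm_e, sum_const, nsmul_eq_mul, mul_one]
      rw [← Int.cast_natCast, Int.card_Icc_of_le _ _ (by omega)]
      push_cast
      ring

lemma norm_dirichletKernel_mul_abs_sin_le {L : ℤ} (hL : 0 ≤ L) (t : ℝ) :
    ‖dirichletKernel L t‖ * |sin (π * t)| ≤ 1 := by
  have hgeom : dirichletKernel L t * (e t - 1) = e t ^ (L + 1) - e t ^ (-L) := by
    simp only [dirichletKernel, e_intCast_mul]
    exact geom_sum_Icc_zpow_mul (Complex.exp_ne_zero _) (by omega)
  have h2 : ‖dirichletKernel L t‖ * (2 * |sin (π * t)|) ≤ 2 := by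
    rw [← norm_e_sub_one, ← norm_mul, hgeom]
    refine (norm_sub_le _ _).trans_eq ?_
    rw [norm_zpow, norm_zpow, norm_e, one_zpow, one_zpow, one_add_one_eq_two]
  linarith

noncomputable def boxConv (A B k : ℤ) : ℝ :=
  ∑ a ∈ Icc (-A) A, ∑ b ∈ Icc (-B) B, if a + b = k then 1 else 0

lemma boxConv_of_abs_le {A B k : ℤ} (hA : 0 ≤ A) (hk : |k| ≤ B - A) :
    boxConv A B k = 2 * A + 1 := by
  have hk' := abs_le.mp hk
  have hrow : ∀ a ∈ Icc (-A) A, (∑ b ∈ Icc (-B) B, if a + b = k then (1 : ℝ) else 0) = 1 := by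
    intro a ha
    simp_rw [← eq_sub_iff_add_eq']
    rw [sum_ite_eq', if_pos (by simp only [mem_Icc] at ha ⊢; omega)]
  rw [boxConv, sum_congr rfl hrow, sum_const, nsmul_one, ← Int.cast_natCast,
    Int.card_Icc_of_le _ _ (by omega)]
  push_cast
  ring

lemma boxConv_of_lt_abs {A B k : ℤ} (hk : A + B < |k|) : boxConv A B k = 0 := by
  refine sum_eq_zero fun a ha => sum_eq_zero fun b hb => if_neg ?_
  simp only [mem_Icc] at ha hb
  rcases lt_abs.mp hk with h | h <;> omega

lemma sum_boxConv_mul_e {A B : ℤ} {S : Finset ℤ} (hS : Icc (-(A + B)) (A + B) ⊆ S) (t : ℝ) :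
    ∑ k ∈ S, (boxConv A B k : ℂ) * e (k * t) = dirichletKernel A t * dirichletKernel B t :=
  calc ∑ k ∈ S, (boxConv A B k : ℂ) * e (k * t)
      = ∑ a ∈ Icc (-A) A, ∑ b ∈ Icc (-B) B, ∑ k ∈ S, if a + b = k then e (k * t) else 0 := by
        simp only [boxConv, Complex.ofReal_sum, sum_mul]
        rw [sum_comm]
        refine sum_congr rfl fun a _ => ?_
        rw [sum_comm]
        refine sum_congr rfl fun b _ => sum_congr rfl fun k _ => ?_
        split_ifs <;> simp
    _ = ∑ a ∈ Icc (-A) A, ∑ b ∈ Icc (-B) B, e (a * t) * e (b * t) := by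
        refine sum_congr rfl fun a ha => sum_congr rfl fun b hb => ?_
        rw [sum_ite_eq, if_pos (hS (by simp only [mem_Icc] at ha hb ⊢; omega)), ← e_add]
        push_cast
        ring_nf
    _ = dirichletKernel A t * dirichletKernel B t := (sum_mul_sum _ _ _ _).symm

noncomputable def boxKernel (A B k : ℤ) : ℝ := boxConv A B k / (2 * A + 1)

lemma boxKernel_of_abs_le {A B k : ℤ} (hA : 0 ≤ A) (hk : |k| ≤ B - A) : boxKernel A B k = 1 := by
  have hA' : (0 : ℝ) ≤ A := by exact_mod_cast hA
  rw [boxKernel, boxConv_of_abs_le hA hk, div_self (by linarith)]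

lemma boxKernel_of_lt_abs {A B k : ℤ} (hk : A + B < |k|) : boxKernel A B k = 0 := by
  rw [boxKernel, boxConv_of_lt_abs hk, zero_div]

lemma norm_sum_boxKernel_mul_e {A B : ℤ} {S : Finset ℤ} (hA : 0 ≤ A)
    (hS : Icc (-(A + B)) (A + B) ⊆ S) (t : ℝ) :
    ‖∑ k ∈ S, (boxKernel A B k : ℂ) * e (k * t)‖ =
      ‖dirichletKernel A t‖ * ‖dirichletKernel B t‖ / (2 * A + 1) := by
  have hA' : (0 : ℝ) ≤ A := by exact_mod_cast hA
  have hsum : ∑ k ∈ S, (boxKernel A B k : ℂ) * e (k * t) =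
      (∑ k ∈ S, (boxConv A B k : ℂ) * e (k * t)) / ((2 * A + 1 : ℝ) : ℂ) := by
    rw [sum_div]
    refine sum_congr rfl fun k _ => ?_
    rw [boxKernel, Complex.ofReal_div]
    ring
  rw [hsum, sum_boxConv_mul_e hS, norm_div, norm_mul, Complex.norm_real,
    Real.norm_of_nonneg (by linarith)]

lemma two_mul_min_le_sin_pi_mul {t : ℝ} (h0 : 0 ≤ t) (h1 : t ≤ 1) :
    2 * min t (1 - t) ≤ sin (π * t) := by
  have jordan {y : ℝ} (hy0 : 0 ≤ y) (hy : y ≤ 1 / 2) : 2 * y ≤ sin (π * y) := by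
    have := mul_le_sin (by positivity : 0 ≤ π * y) (by nlinarith [pi_pos])
    rwa [show 2 / π * (π * y) = 2 * y by field_simp] at this
  rcases le_total t (1 / 2) with ht | ht
  · exact (mul_le_mul_of_nonneg_left (min_le_left _ _) zero_le_two).trans (jordan h0 ht)
  · refine (mul_le_mul_of_nonneg_left (min_le_right _ _) zero_le_two).trans ?_
    rw [← sin_pi_sub, ← mul_one_sub]
    exact jordan (by linarith) (by linarith)

lemma min_le_half_mul_abs_sin {j R : ℝ} (hj : 0 < j) (hjR : j < R) :
    min j (R - j) ≤ R / 2 * |sin (π * (j / R))| := by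
  have hR : 0 < R := hj.trans hjR
  have hmin : min j (R - j) = R * min (j / R) (1 - j / R) := by
    rw [mul_min_of_nonneg _ _ hR.le]
    congr 1 <;> field_simp
  calc min j (R - j) = R / 2 * (2 * min (j / R) (1 - j / R)) := by rw [hmin]; ring
    _ ≤ R / 2 * sin (π * (j / R)) := by
        gcongr
        exact two_mul_min_le_sin_pi_mul (by positivity) ((div_le_one hR).mpr hjR.le)
    _ ≤ R / 2 * |sin (π * (j / R))| := by
        gcongr
        exact le_abs_self _

noncomputable def kernelMajorant (P c x m : ℝ) : ℝ := min P (min (x / m) (x ^ 2 / (c * m ^ 2)))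

lemma kernelMajorant_nonneg {P c x m : ℝ} (hP : 0 ≤ P) (hc : 0 ≤ c) (hx : 0 ≤ x) (hm : 0 ≤ m) :
    0 ≤ kernelMajorant P c x m := by
  unfold kernelMajorant
  positivity

lemma div_le_kernelMajorant {u v c P s x m : ℝ} (hu : 0 ≤ u) (huc : u ≤ c) (hus : u * s ≤ 1)
    (hv : 0 ≤ v) (hvP : v ≤ P) (hvs : v * s ≤ 1) (hc : 0 < c) (hs : 0 ≤ s) (hm : 0 < m)
    (hmx : m ≤ x * s) : u * v / c ≤ kernelMajorant P c x m := by
  have hx : 0 < x := pos_of_mul_pos_left (hm.trans_le hmx) hs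
  have hum : u * m ≤ x := by nlinarith [mul_le_mul_of_nonneg_left hmx hu]
  have hvm : v * m ≤ x := by nlinarith [mul_le_mul_of_nonneg_left hmx hv]
  refine le_min ?_ (le_min ?_ ?_)
  · rw [div_le_iff₀ hc]
    nlinarith [mul_le_mul huc hvP hv hc.le]
  · rw [div_le_div_iff₀ hc hm]
    nlinarith [mul_le_mul huc hvm (by positivity) hc.le]
  · rw [div_le_div_iff₀ hc (by positivity)]
    nlinarith [mul_le_mul hum hvm (by positivity) hx.le]

lemma sum_Ioc_floor_inv_le {u v : ℝ} (hu : 0 < u) (huv : u ≤ v) (hv : 1 ≤ v) :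
    ∑ m ∈ Ioc ⌊u⌋₊ ⌊v⌋₊, (m : ℝ)⁻¹ ≤ 1 + log (v / u) := by
  have hharmonic (n : ℕ) : ∑ m ∈ Ioc 0 n, (m : ℝ)⁻¹ = harmonic n := by
    rw [harmonic_eq_sum_Icc, ← Icc_add_one_left_eq_Ioc]
    push_cast
    rfl
  have hsplit := sum_Ioc_consecutive (fun m : ℕ => (m : ℝ)⁻¹) (Nat.zero_le ⌊u⌋₊)
    (Nat.floor_le_floor huv)
  rw [hharmonic, hharmonic] at hsplit
  rw [log_div (by positivity) hu.ne']
  linarith [log_le_harmonic_floor u hu.le, harmonic_floor_le_one_add_log v hv]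

lemma sum_Ioc_floor_inv_sq_le {v : ℝ} (hv : 0 < v) (n : ℕ) :
    ∑ m ∈ Ioc ⌊v⌋₊ n, ((m : ℝ) ^ 2)⁻¹ ≤ 2 / v :=
  calc ∑ m ∈ Ioc ⌊v⌋₊ n, ((m : ℝ) ^ 2)⁻¹ ≤ ∑ m ∈ Ioo ⌊v⌋₊ (n + 1), ((m : ℝ) ^ 2)⁻¹ :=
        sum_le_sum_of_subset_of_nonneg (fun m hm => by simp only [mem_Ioc, mem_Ioo] at hm ⊢; omega)
          fun _ _ _ => by positivity
    _ ≤ 2 / (⌊v⌋₊ + 1) := sum_Ioo_inv_sq_le _ _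
    _ ≤ 2 / v := div_le_div_of_nonneg_left zero_le_two hv (Nat.lt_floor_add_one v).le

theorem sum_Ioc_kernelMajorant_le {P c x : ℝ} (hc : 0 < c) (hcP : c ≤ P) (hcx : c ≤ x) (n : ℕ) :
    ∑ m ∈ Ioc 0 n, kernelMajorant P c x m ≤ x * (4 + log (P / c)) := by
  have hP : 0 < P := hc.trans_le hcP
  have hx : 0 < x := hc.trans_le hcx
  set a := ⌊x / P⌋₊
  set b := ⌊x / c⌋₊
  have hab : a ≤ b := Nat.floor_le_floor (div_le_div_of_nonneg_left hx.le hc hcP)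
  have hhead : ∑ m ∈ Ioc 0 a, kernelMajorant P c x m ≤ x :=
    calc ∑ m ∈ Ioc 0 a, kernelMajorant P c x m ≤ ∑ m ∈ Ioc 0 a, P :=
          sum_le_sum fun _ _ => min_le_left _ _
      _ = a * P := by simp
      _ ≤ x / P * P := by gcongr; exact Nat.floor_le (by positivity)
      _ = x := div_mul_cancel₀ x hP.ne'
  have hmiddle : ∑ m ∈ Ioc a b, kernelMajorant P c x m ≤ x * (1 + log (P / c)) :=
    calc ∑ m ∈ Ioc a b, kernelMajorant P c x m ≤ ∑ m ∈ Ioc a b, x * (m : ℝ)⁻¹ :=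
          sum_le_sum fun _ _ => (min_le_right _ _).trans (min_le_left _ _)
      _ = x * ∑ m ∈ Ioc a b, (m : ℝ)⁻¹ := (mul_sum _ _ _).symm
      _ ≤ x * (1 + log ((x / c) / (x / P))) := by
          gcongr
          exact sum_Ioc_floor_inv_le (by positivity) (div_le_div_of_nonneg_left hx.le hc hcP)
            ((one_le_div hc).mpr hcx)
      _ = x * (1 + log (P / c)) := by
          rw [div_div_div_cancel_left' _ _ hx.ne']
  have htail (n' : ℕ) : ∑ m ∈ Ioc b n', kernelMajorant P c x m ≤ 2 * x :=
    calc ∑ m ∈ Ioc b n', kernelMajorant P c x m ≤ ∑ m ∈ Ioc b n', x ^ 2 / c * ((m : ℝ) ^ 2)⁻¹ :=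
          sum_le_sum fun _ _ => ((min_le_right _ _).trans (min_le_right _ _)).trans_eq
            (by field_simp)
      _ = x ^ 2 / c * ∑ m ∈ Ioc b n', ((m : ℝ) ^ 2)⁻¹ := (mul_sum _ _ _).symm
      _ ≤ x ^ 2 / c * (2 / (x / c)) := by
          gcongr
          exact sum_Ioc_floor_inv_sq_le (by positivity) n'
      _ = 2 * x := by field_simp
  calc ∑ m ∈ Ioc 0 n, kernelMajorant P c x m
      ≤ ∑ m ∈ Ioc 0 (max n b), kernelMajorant P c x m :=
        sum_le_sum_of_subset_of_nonneg (Ioc_subset_Ioc_right (le_max_left n b))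
          fun _ _ _ => kernelMajorant_nonneg hP.le hc.le hx.le (Nat.cast_nonneg _)
    _ = ∑ m ∈ Ioc 0 a, kernelMajorant P c x m + ∑ m ∈ Ioc a b, kernelMajorant P c x m
          + ∑ m ∈ Ioc b (max n b), kernelMajorant P c x m := by
        rw [sum_Ioc_consecutive _ (Nat.zero_le a) hab,
          sum_Ioc_consecutive _ (Nat.zero_le b) (le_max_right n b)]
    _ ≤ x * (4 + log (P / c)) := by linarith [htail (max n b)]

lemma sum_Ioo_kernelMajorant_le {P c x : ℝ} (hc : 0 < c) (hcP : c ≤ P) (hcx : c ≤ x) (R : ℤ) :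
    ∑ j ∈ Ioo 0 R, kernelMajorant P c x j ≤ x * (4 + log (P / c)) :=
  calc ∑ j ∈ Ioo 0 R, kernelMajorant P c x j
      ≤ ∑ j ∈ (Ioc 0 R.toNat).map (Nat.castEmbedding : ℕ ↪ ℤ), kernelMajorant P c x j := by
        refine sum_le_sum_of_subset_of_nonneg (fun j hj => ?_) fun j hj _ => ?_
        · simp only [mem_Ioo] at hj
          simp only [mem_map, mem_Ioc, Nat.castEmbedding_apply]
          exact ⟨j.toNat, by omega, by omega⟩
        · simp only [mem_map, mem_Ioc, Nat.castEmbedding_apply] at hj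
          obtain ⟨m, -, rfl⟩ := hj
          exact kernelMajorant_nonneg (hc.le.trans hcP) hc.le (hc.le.trans hcx) (by positivity)
    _ = ∑ m ∈ Ioc 0 R.toNat, kernelMajorant P c x m := by simp
    _ ≤ x * (4 + log (P / c)) := sum_Ioc_kernelMajorant_le hc hcP hcx _

theorem sum_norm_dirichletKernel_mul_le {A B R : ℤ} (hA : 0 ≤ A) (hAB : A ≤ B)
    (hR : 2 * (2 * A + 1) ≤ R) :
    ∑ j ∈ Icc 1 R, ‖dirichletKernel A (j / R)‖ * ‖dirichletKernel B (j / R)‖ / (2 * A + 1)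
      ≤ 2 * B + 1 + R * (4 + log ((2 * B + 1) / (2 * A + 1))) := by
  have hA' : (0 : ℝ) ≤ A := by exact_mod_cast hA
  have hAB' : (A : ℝ) ≤ B := by exact_mod_cast hAB
  have hR' : 2 * (2 * A + 1) ≤ (R : ℝ) := by exact_mod_cast hR
  have hc : (0 : ℝ) < 2 * A + 1 := by linarith
  have hcP : (2 * A + 1 : ℝ) ≤ 2 * B + 1 := by linarith
  have hcx : (2 * A + 1 : ℝ) ≤ R / 2 := by linarith
  set F : ℤ → ℝ := fun j =>
    ‖dirichletKernel A (j / R)‖ * ‖dirichletKernel B (j / R)‖ / (2 * A + 1)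
  set φ : ℤ → ℝ := fun j => kernelMajorant (2 * B + 1) (2 * A + 1) (R / 2) j
  have hF (j : ℤ) : F j ≤ 2 * B + 1 := by
    rw [div_le_iff₀ hc, mul_comm (2 * (B : ℝ) + 1)]
    exact mul_le_mul (norm_dirichletKernel_le hA _) (norm_dirichletKernel_le (hA.trans hAB) _)
      (norm_nonneg _) hc.le
  have hFφ : ∀ j ∈ Ioo 0 R, F j ≤ φ j + φ (R - j) := by
    intro j hj
    simp only [mem_Ioo] at hj
    have hj0 : (0 : ℝ) < j := by exact_mod_cast hj.1
    have hjR : (j : ℝ) < R := by exact_mod_cast hj.2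
    have hmin := div_le_kernelMajorant (norm_nonneg _) (norm_dirichletKernel_le hA _)
      (norm_dirichletKernel_mul_abs_sin_le hA _) (norm_nonneg _)
      (norm_dirichletKernel_le (hA.trans hAB) _)
      (norm_dirichletKernel_mul_abs_sin_le (hA.trans hAB) _) hc (abs_nonneg _)
      (lt_min hj0 (sub_pos.mpr hjR)) (min_le_half_mul_abs_sin hj0 hjR)
    have hφ0 (m : ℤ) (hm : 0 ≤ m) : 0 ≤ φ m :=
      kernelMajorant_nonneg (by linarith) hc.le (by linarith) (by exact_mod_cast hm)
    rcases min_choice (j : ℝ) (R - j) with h | h <;> rw [h] at hmin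
    · exact hmin.trans (le_add_of_nonneg_right (hφ0 _ (by omega)))
    · have hRj : F j ≤ φ (R - j) := by simpa [φ] using hmin
      exact hRj.trans (le_add_of_nonneg_left (hφ0 _ hj.1.le))
  have hreflect : ∑ j ∈ Ioo 0 R, φ (R - j) = ∑ j ∈ Ioo 0 R, φ j :=
    sum_nbij' (R - ·) (R - ·) (fun j hj => by simp only [mem_Ioo] at hj ⊢; omega)
      (fun j hj => by simp only [mem_Ioo] at hj ⊢; omega) (fun j _ => by simp)
      (fun j _ => by simp) (fun j _ => by simp)
  have hIcc : Icc 1 R = insert R (Ioo 0 R) := by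
    ext j
    simp only [mem_Icc, mem_insert, mem_Ioo]
    omega
  calc ∑ j ∈ Icc 1 R, F j = F R + ∑ j ∈ Ioo 0 R, F j := by
        rw [hIcc, sum_insert (by simp)]
    _ ≤ 2 * B + 1 + ∑ j ∈ Ioo 0 R, (φ j + φ (R - j)) := add_le_add (hF R) (sum_le_sum hFφ)
    _ = 2 * B + 1 + 2 * ∑ j ∈ Ioo 0 R, φ j := by rw [sum_add_distrib, hreflect]; ring
    _ ≤ 2 * B + 1 + 2 * (R / 2 * (4 + log ((2 * B + 1) / (2 * A + 1)))) := by
        gcongr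
        exact sum_Ioo_kernelMajorant_le hc hcP hcx R
    _ = 2 * B + 1 + R * (4 + log ((2 * B + 1) / (2 * A + 1))) := by ring

lemma log_div_le_two_add_log {M N : ℝ} (hM : 1 ≤ M) (hN : 0 ≤ N) :
    log ((2 * (N + M) + 1) / (2 * (M - 1) + 1)) ≤ 2 + log (1 + N / M) := by
  have hM0 : 0 < M := by linarith
  have hratio : (2 * (N + M) + 1) / (2 * (M - 1) + 1) ≤ 3 * (1 + N / M) := by
    rw [div_le_iff₀ (by linarith), show 3 * (1 + N / M) * (2 * (M - 1) + 1)
      = 3 * (N + M) * (2 * M - 1) / M by field_simp; ring, le_div_iff₀ hM0]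
    nlinarith
  have hlog3 : log 3 ≤ 2 := by linarith [log_le_sub_one_of_pos (by norm_num : (0 : ℝ) < 3)]
  calc log ((2 * (N + M) + 1) / (2 * (M - 1) + 1)) ≤ log (3 * (1 + N / M)) :=
        log_le_log (by apply div_pos <;> linarith) hratio
    _ = log 3 + log (1 + N / M) := log_mul (by norm_num) (by positivity)
    _ ≤ 2 + log (1 + N / M) := by linarith

/-- Lemma 3.3: for integers `2 ≤ M < N` and `R ≥ 2N + 4M + 1` there is `K : ℤ → ℝ` with
`K(k) = 1` for `|k| ≤ N`, `K(k) = 0` for `|k| ≥ N + 2M`, and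
`(1/R) ∑_{j=1}^R |K̂(j/R)| ≤ 32π(2 + log(1 + N/M))`, where
`K̂(t) = ∑_k K(k) e(kt)` (a finite sum since `K` is supported on `|k| < N + 2M`). -/
theorem kernel_exists
    (M N R : ℤ) (hM : 2 ≤ M) (hMN : M < N) (hR : 2 * N + 4 * M + 1 ≤ R) :
    ∃ K : ℤ → ℝ,
      (∀ k : ℤ, |k| ≤ N → K k = 1) ∧
      (∀ k : ℤ, N + 2 * M ≤ |k| → K k = 0) ∧
      (1 / (R : ℝ)) * ∑ j ∈ Finset.Icc (1 : ℤ) R,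
          ‖∑ k ∈ Finset.Icc (-(N + 2 * M)) (N + 2 * M),
              (K k : ℂ) * e ((k : ℝ) * ((j : ℝ) / (R : ℝ)))‖ ≤
        32 * Real.pi * (2 + Real.log (1 + (N : ℝ) / (M : ℝ))) := by
  refine ⟨boxKernel (M - 1) (N + M), fun k hk => boxKernel_of_abs_le (by omega) (by omega),
    fun k hk => boxKernel_of_lt_abs (by omega), ?_⟩
  have hS : Icc (-(M - 1 + (N + M))) (M - 1 + (N + M)) ⊆ Icc (-(N + 2 * M)) (N + 2 * M) :=
    Icc_subset_Icc (by omega) (by omega)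
  simp_rw [norm_sum_boxKernel_mul_e (by omega) hS]
  have hsum := sum_norm_dirichletKernel_mul_le (R := R) (by omega : 0 ≤ M - 1)
    (by omega : M - 1 ≤ N + M) (by omega)
  have hlog := log_div_le_two_add_log (by exact_mod_cast (by omega : 1 ≤ M) : (1 : ℝ) ≤ M)
    (by exact_mod_cast (by omega : 0 ≤ N) : (0 : ℝ) ≤ N)
  have hR0 : (0 : ℝ) < R := by exact_mod_cast (by omega : 0 < R)
  have hPR : 2 * (N + M : ℝ) + 1 ≤ R := by exact_mod_cast (by omega : 2 * (N + M) + 1 ≤ R)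
  have hL : 0 ≤ log (1 + (N : ℝ) / M) :=
    log_nonneg (le_add_of_nonneg_right (div_nonneg (by exact_mod_cast (by omega : 0 ≤ N))
      (by exact_mod_cast (by omega : 0 ≤ M))))
  have hconst : 7 + log (1 + (N : ℝ) / M) ≤ 32 * π * (2 + log (1 + (N : ℝ) / M)) := by
    nlinarith [pi_gt_three]
  push_cast at hsum ⊢
  rw [one_div_mul_eq_div, div_le_iff₀ hR0]
  nlinarith [mul_le_mul_of_nonneg_left hconst hR0.le, mul_le_mul_of_nonneg_left hlog hR0.le]
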